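/- arXiv:1712.10322 — 2 statements merged into one kernel-verified Lean document; each statement's English description precedes it below -/
import Mathlib

section
/- Let G and H be finite simple graphs on n ≥ 3 vertices with vertex sets {v_1, …, v_n} and {u_1, …, u_n} such that G − v_i is isomorphic to H − u_i for every i. If every vertex of G has even degree, then every vertex of H has even degree. -/
lemma degree_induce_compl {n : ℕ} (G : SimpleGraph (Fin n)) [DecidableRel G.Adj] (i : Fin n)
    (v : ({i}ᶜ : Set (Fin n))) :
    (G.induce ({i}ᶜ : Set (Fin n))).degree v = (G.neighborFinset v.val \ {i}).card := by
  rw [← SimpleGraph.card_neighborSet_eq_degree, ← Set.toFinset_card]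
  refine Finset.card_bij (fun b _ => (b : Fin n)) ?_ ?_ ?_
  · rintro ⟨b, hb⟩ h
    simp only [SimpleGraph.mem_neighborSet, Set.mem_toFinset] at h
    simp only [Finset.mem_sdiff, SimpleGraph.mem_neighborFinset, Finset.mem_singleton]
    exact ⟨h, by simpa using hb⟩
  · rintro ⟨a, ha⟩ _ ⟨b, hb⟩ _ h
    simpa using h
  · intro a ha
    simp only [Finset.mem_sdiff, SimpleGraph.mem_neighborFinset, Finset.mem_singleton] at ha
    exact ⟨⟨a, by simpa using ha.2⟩, by simpa using ha.1, rfl⟩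

lemma two_mul_card_induce {n : ℕ} (G : SimpleGraph (Fin n)) [DecidableRel G.Adj] (i : Fin n) :
    2 * (G.induce ({i}ᶜ : Set (Fin n))).edgeFinset.card + 2 * G.degree i
      = 2 * G.edgeFinset.card := by
  have h1 := (G.induce ({i}ᶜ : Set (Fin n))).sum_degrees_eq_twice_card_edges
  have h2 : ∑ v : ({i}ᶜ : Set (Fin n)), (G.induce ({i}ᶜ : Set (Fin n))).degree v
      = ∑ v ∈ Finset.univ.erase i, (G.neighborFinset v \ {i}).card := by
    simp only [degree_induce_compl]
    rw [Finset.sum_set_coe (f := fun v => (G.neighborFinset v \ {i}).card)]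
    congr 1
    ext x
    simp [eq_comm]
  have h3 : ∑ v ∈ Finset.univ.erase i, ((G.neighborFinset v \ {i}).card
        + (G.neighborFinset v ∩ {i}).card)
      = ∑ v ∈ Finset.univ.erase i, G.degree v :=
    Finset.sum_congr rfl fun v _ => Finset.card_sdiff_add_card_inter _ _
  have h4 : ∑ v ∈ Finset.univ.erase i, (G.neighborFinset v ∩ {i}).card = G.degree i := by
    have e1 : ∀ v ∈ Finset.univ.erase i, (G.neighborFinset v ∩ {i}).card
        = if G.Adj i v then 1 else 0 := by
      intro v _
      by_cases h : G.Adj i v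
      · rw [Finset.inter_singleton_of_mem (by simpa [SimpleGraph.adj_comm] using h)]; simp [h]
      · rw [Finset.inter_singleton_of_notMem (by simpa [SimpleGraph.adj_comm] using h)]; simp [h]
    rw [Finset.sum_congr rfl e1, Finset.sum_boole]
    rw [Finset.filter_erase, Finset.erase_eq_of_notMem (by simp)]
    simp [SimpleGraph.degree, SimpleGraph.neighborFinset_eq_filter]
  have h5 : ∑ v ∈ Finset.univ.erase i, G.degree v + G.degree i = 2 * G.edgeFinset.card := by
    rw [Finset.sum_erase_add _ _ (Finset.mem_univ i)]
    exact G.sum_degrees_eq_twice_card_edges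
  rw [Finset.sum_add_distrib] at h3
  omega



/-- If `G` and `H` are hypomorphic finite simple graphs on `n ≥ 3`
vertices (corresponding vertex-deleted subgraphs are isomorphic) and every
vertex of `G` has even degree, then every vertex of `H` has even degree. -/
theorem eulerian_degrees_of_hypomorphic {n : ℕ} (hn : 3 ≤ n)
    (G H : SimpleGraph (Fin n)) [DecidableRel G.Adj] [DecidableRel H.Adj]
    (hyp : ∀ i : Fin n,
      Nonempty ((G.induce ({i}ᶜ : Set (Fin n))) ≃g (H.induce ({i}ᶜ : Set (Fin n)))))
    (hG : ∀ v : Fin n, Even (G.degree v)) :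
    ∀ v : Fin n, Even (H.degree v) := by
  have key : ∀ i : Fin n, (G.induce ({i}ᶜ : Set (Fin n))).edgeFinset.card
      = (H.induce ({i}ᶜ : Set (Fin n))).edgeFinset.card :=
    fun i => (hyp i).some.card_edgeFinset_eq
  set eG := G.edgeFinset.card with heG
  set eH := H.edgeFinset.card with heH
  -- sum the edge-count identities over all i
  have sumG : ∑ i : Fin n, (2 * (G.induce ({i}ᶜ : Set (Fin n))).edgeFinset.card
      + 2 * G.degree i) = n * (2 * eG) := by
    rw [Finset.sum_congr rfl fun i _ => two_mul_card_induce G i]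
    rw [Finset.sum_const, Finset.card_univ, Fintype.card_fin, smul_eq_mul]
  have sumH : ∑ i : Fin n, (2 * (H.induce ({i}ᶜ : Set (Fin n))).edgeFinset.card
      + 2 * H.degree i) = n * (2 * eH) := by
    rw [Finset.sum_congr rfl fun i _ => two_mul_card_induce H i]
    rw [Finset.sum_const, Finset.card_univ, Fintype.card_fin, smul_eq_mul]
  rw [Finset.sum_add_distrib] at sumG sumH
  have degsumG : ∑ i : Fin n, 2 * G.degree i = 2 * (2 * eG) := by
    rw [← Finset.mul_sum, G.sum_degrees_eq_twice_card_edges]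
  have degsumH : ∑ i : Fin n, 2 * H.degree i = 2 * (2 * eH) := by
    rw [← Finset.mul_sum, H.sum_degrees_eq_twice_card_edges]
  have sums_eq : ∑ i : Fin n, 2 * (G.induce ({i}ᶜ : Set (Fin n))).edgeFinset.card
      = ∑ i : Fin n, 2 * (H.induce ({i}ᶜ : Set (Fin n))).edgeFinset.card := by
    exact Finset.sum_congr rfl fun i _ => by rw [key i]
  have main : eG = eH := by
    have hz : (2 * (n : ℤ) - 4) ≠ 0 := by
      have : (3 : ℤ) ≤ (n : ℤ) := by exact_mod_cast hn
      omega
    have hq : (2 * (n : ℤ) - 4) * eG = (2 * (n : ℤ) - 4) * eH := by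
      have e1 : ((∑ i : Fin n, 2 * (G.induce ({i}ᶜ : Set (Fin n))).edgeFinset.card : ℕ) : ℤ)
          + 2 * (2 * eG) = n * (2 * eG) := by exact_mod_cast degsumG ▸ sumG
      have e2 : ((∑ i : Fin n, 2 * (H.induce ({i}ᶜ : Set (Fin n))).edgeFinset.card : ℕ) : ℤ)
          + 2 * (2 * eH) = n * (2 * eH) := by exact_mod_cast degsumH ▸ sumH
      rw [sums_eq] at e1
      ring_nf
      ring_nf at e1 e2
      linarith
    exact_mod_cast mul_left_cancel₀ hz hq
  intro v
  have g1 := two_mul_card_induce G v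
  have g2 := two_mul_card_induce H v
  rw [key v] at g1
  have : H.degree v = G.degree v := by omega
  rw [this]
  exact hG v
end

section
/- Let G and H be finite simple graphs on n ≥ 3 vertices with vertex sets {v_1, …, v_n} and {u_1, …, u_n} such that G − v_i is isomorphic to H − u_i for every i. Then G and H have the same number of connected components. -/
open SimpleGraph Function

section Aux

variable {V : Type*}

private lemma aux_card_option {α : Type*} [Finite α] :
    Nat.card (Option α) = Nat.card α + 1 := by
  have : Fintype α := Fintype.ofFinite α
  simp [Nat.card_eq_fintype_card]

private lemma aux_finite_option {α : Type*} [Finite α] : Finite (Option α) := by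
  have : Fintype α := Fintype.ofFinite α
  exact Finite.of_fintype _

/-- The inclusion homomorphism from an induced subgraph. -/
private def inclHom (G : SimpleGraph V) (s : Set V) : G.induce s →g G :=
  ⟨Subtype.val, fun h => h⟩

private lemma reachable_induce_of_walk {G : SimpleGraph V} {s : Set V} {u v : V}
    (p : G.Walk u v) (hp : ∀ x ∈ p.support, x ∈ s) (hu : u ∈ s) (hv : v ∈ s) :
    (G.induce s).Reachable ⟨u, hu⟩ ⟨v, hv⟩ := by
  induction p with
  | nil => exact Reachable.refl _
  | @cons a b c hab q ih =>
    have hb : b ∈ s := hp b (by simp)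
    have hadj : (G.induce s).Adj ⟨a, hu⟩ ⟨b, hb⟩ := hab
    exact hadj.reachable.trans (ih (fun x hx => hp x (by simp [hx])) hb hv)

private lemma reachable_of_mem_support [DecidableEq V] {G : SimpleGraph V} {u v w : V}
    (p : G.Walk u v) (h : w ∈ p.support) : G.Reachable u w :=
  ⟨p.takeUntil w h⟩

private lemma isolated_eq_of_reachable {G : SimpleGraph V} {v x : V}
    (h : ∀ w, ¬ G.Adj v w) (hr : G.Reachable v x) : v = x := by
  obtain ⟨p⟩ := hr
  cases p with
  | nil => rfl
  | cons h' q => exact absurd h' (h _)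

variable [Finite V]

/-- Deleting a vertex increases the number of components by at most... i.e.
`c(G) ≤ c(G - v) + 1`. -/
private lemma card_cc_le_succ (G : SimpleGraph V) (v : V) :
    Nat.card G.ConnectedComponent
      ≤ Nat.card (G.induce ({v}ᶜ : Set V)).ConnectedComponent + 1 := by
  classical
  haveI : Finite (Option (G.induce ({v}ᶜ : Set V)).ConnectedComponent) := aux_finite_option
  set f : Option (G.induce ({v}ᶜ : Set V)).ConnectedComponent → G.ConnectedComponent :=
    fun o => o.elim (G.connectedComponentMk v) (fun C => C.map (inclHom G {v}ᶜ)) with hf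
  have hsurj : Surjective f := by
    intro C
    refine C.ind (fun x => ?_)
    by_cases hx : x = v
    · exact ⟨none, by simp [hf, hx]⟩
    · exact ⟨some ((G.induce ({v}ᶜ : Set V)).connectedComponentMk ⟨x, hx⟩), rfl⟩
  calc Nat.card G.ConnectedComponent ≤ Nat.card (Option (G.induce ({v}ᶜ : Set V)).ConnectedComponent) :=
        Nat.card_le_card_of_surjective f hsurj
    _ = _ + 1 := aux_card_option

/-- Deleting an isolated vertex decreases the component count by exactly one. -/
private lemma card_cc_isolated (G : SimpleGraph V) {v : V} (h : ∀ w, ¬ G.Adj v w) :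
    Nat.card G.ConnectedComponent
      = Nat.card (G.induce ({v}ᶜ : Set V)).ConnectedComponent + 1 := by
  classical
  refine le_antisymm (card_cc_le_succ G v) ?_
  set f : Option (G.induce ({v}ᶜ : Set V)).ConnectedComponent → G.ConnectedComponent :=
    fun o => o.elim (G.connectedComponentMk v) (fun C => C.map (inclHom G {v}ᶜ)) with hf
  have hnr : ∀ x : ({v}ᶜ : Set V), ¬ G.Reachable v x.1 := by
    intro x hr
    exact x.2 (isolated_eq_of_reachable h hr).symm
  have hmapinj : ∀ C D : (G.induce ({v}ᶜ : Set V)).ConnectedComponent,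
      C.map (inclHom G {v}ᶜ) = D.map (inclHom G {v}ᶜ) → C = D := by
    refine ConnectedComponent.ind₂ (fun x y hxy => ?_)
    rw [ConnectedComponent.map_mk, ConnectedComponent.map_mk] at hxy
    obtain ⟨p⟩ := ConnectedComponent.exact hxy
    have hsup : ∀ z ∈ p.support, z ∈ ({v}ᶜ : Set V) := by
      intro z hz hzv
      simp only [Set.mem_singleton_iff] at hzv
      subst hzv
      exact hnr x ((reachable_of_mem_support p hz).symm)
    exact ConnectedComponent.sound (reachable_induce_of_walk p hsup x.2 y.2)
  have hinj : Injective f := by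
    rintro (_ | C) (_ | D) hCD
    · rfl
    · exfalso
      revert hCD
      refine D.ind (fun y => ?_)
      intro hCD
      simp only [hf, Option.elim, ConnectedComponent.map_mk] at hCD
      exact hnr y (ConnectedComponent.exact hCD)
    · exfalso
      revert hCD
      refine C.ind (fun y => ?_)
      intro hCD
      simp only [hf, Option.elim, ConnectedComponent.map_mk] at hCD
      exact hnr y (ConnectedComponent.exact hCD.symm)
    · exact congrArg some (hmapinj C D hCD)
  calc Nat.card (G.induce ({v}ᶜ : Set V)).ConnectedComponent + 1
      = Nat.card (Option (G.induce ({v}ᶜ : Set V)).ConnectedComponent) := aux_card_option.symm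
    _ ≤ Nat.card G.ConnectedComponent := Nat.card_le_card_of_injective f hinj

/-- Deleting a non-isolated vertex does not decrease the component count. -/
private lemma card_cc_le_of_adj (G : SimpleGraph V) {v w : V} (h : G.Adj v w) :
    Nat.card G.ConnectedComponent
      ≤ Nat.card (G.induce ({v}ᶜ : Set V)).ConnectedComponent := by
  have hsurj : Surjective (ConnectedComponent.map (inclHom G {v}ᶜ)) := by
    intro C
    refine C.ind (fun x => ?_)
    by_cases hx : x = v
    · refine ⟨(G.induce ({v}ᶜ : Set V)).connectedComponentMk ⟨w, h.ne'⟩, ?_⟩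
      rw [ConnectedComponent.map_mk]
      exact ConnectedComponent.sound (by subst hx; exact h.reachable.symm)
    · exact ⟨(G.induce ({v}ᶜ : Set V)).connectedComponentMk ⟨x, hx⟩, rfl⟩
  exact Nat.card_le_card_of_surjective _ hsurj

end Aux

section NonCut

variable {V : Type*} [Fintype V]

/-- Every graph without isolated vertices has a non-cut vertex. -/
private lemma exists_noncut [Nonempty V] (G : SimpleGraph V) (h : ∀ x, ∃ y, G.Adj x y) :
    ∃ v, Nat.card (G.induce ({v}ᶜ : Set V)).ConnectedComponent
      ≤ Nat.card G.ConnectedComponent := by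
  classical
  obtain ⟨u⟩ := ‹Nonempty V›
  set S : Finset V := Finset.univ.filter (fun w => G.Reachable u w) with hS
  have hSne : S.Nonempty := ⟨u, by simp [hS, Reachable.refl]⟩
  obtain ⟨v, hvS, hmax⟩ := S.exists_max_image (fun w => G.dist u w) hSne
  have hvreach : G.Reachable u v := by simpa [hS] using hvS
  refine ⟨v, ?_⟩
  have key : ∀ x : V, G.Reachable u x → x ≠ v → ∃ p : G.Walk u x, v ∉ p.support := by
    intro x hux hxv
    obtain ⟨p, hp⟩ := hux.exists_walk_length_eq_dist
    refine ⟨p, fun hv => hxv ?_⟩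
    have h1 : G.dist u v ≤ (p.takeUntil v hv).length := SimpleGraph.dist_le _
    have h2 : (p.takeUntil v hv).length + (p.dropUntil v hv).length = p.length := by
      rw [← Walk.length_append, Walk.take_spec]
    have h3 : G.dist u x ≤ G.dist u v := hmax x (by simp [hS, hux])
    have h4 : (p.dropUntil v hv).length = 0 := by omega
    exact (Walk.eq_of_length_eq_zero h4).symm
  have hinj2 : ∀ x y : ({v}ᶜ : Set V), G.Reachable x.1 y.1
      → (G.induce ({v}ᶜ : Set V)).Reachable x y := by
    intro x y hxy
    have hxv : x.1 ≠ v := x.2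
    have hyv : y.1 ≠ v := y.2
    by_cases hux : G.Reachable u x.1
    · obtain ⟨p, hp⟩ := key x.1 hux hxv
      obtain ⟨q, hq⟩ := key y.1 (hux.trans hxy) hyv
      have hsup : ∀ z ∈ (p.reverse.append q).support, z ∈ ({v}ᶜ : Set V) := by
        intro z hz hzv
        simp only [Set.mem_singleton_iff] at hzv
        subst hzv
        rw [Walk.mem_support_append_iff, Walk.support_reverse, List.mem_reverse] at hz
        exact hz.elim hp hq
      exact reachable_induce_of_walk (p.reverse.append q) hsup x.2 y.2
    · obtain ⟨p⟩ := hxy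
      have hsup : ∀ z ∈ p.support, z ∈ ({v}ᶜ : Set V) := by
        intro z hz hzv
        simp only [Set.mem_singleton_iff] at hzv
        subst hzv
        exact hux (hvreach.trans (reachable_of_mem_support p hz).symm)
      exact reachable_induce_of_walk p hsup x.2 y.2
  have hinj : Injective (ConnectedComponent.map (inclHom G {v}ᶜ)) := by
    refine ConnectedComponent.ind₂ (fun x y hxy => ?_)
    rw [ConnectedComponent.map_mk, ConnectedComponent.map_mk] at hxy
    exact ConnectedComponent.sound (hinj2 x y (ConnectedComponent.exact hxy))
  exact Nat.card_le_card_of_injective _ hinj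

/-- Edge count of a vertex-deleted subgraph. -/
private lemma card_edge_induce [DecidableEq V] (G : SimpleGraph V) [DecidableRel G.Adj] (v : V) :
    Nat.card (G.induce ({v}ᶜ : Set V)).edgeSet + G.degree v = Nat.card G.edgeSet := by
  classical
  have h0 : Nat.card G.edgeSet = G.edgeFinset.card := by
    rw [Nat.card_eq_fintype_card, edgeFinset_card]
  have h1 : Nat.card (G.induce ({v}ᶜ : Set V)).edgeSet
      = (G.induce ({v}ᶜ : Set V)).edgeFinset.card := by
    rw [Nat.card_eq_fintype_card, edgeFinset_card]
  have hsplit : ({e ∈ G.edgeFinset | v ∈ e}).card + ({e ∈ G.edgeFinset | ¬ v ∈ e}).card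
      = G.edgeFinset.card := Finset.card_filter_add_card_filter_not _
  have hdeg : ({e ∈ G.edgeFinset | v ∈ e}).card = G.degree v := by
    rw [← incidenceFinset_eq_filter, card_incidenceFinset_eq_degree]
  have hbij : (G.induce ({v}ᶜ : Set V)).edgeFinset.card
      = ({e ∈ G.edgeFinset | ¬ v ∈ e}).card := by
    refine Finset.card_bij (fun e _ => Sym2.map Subtype.val e) ?_ ?_ ?_
    · intro e he
      induction e using Sym2.ind with
      | _ a b =>
        rw [mem_edgeFinset, mem_edgeSet] at he
        have ha : a.1 ≠ v := a.2
        have hb : b.1 ≠ v := b.2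
        simp only [Sym2.map_pair_eq, Finset.mem_filter, mem_edgeFinset, mem_edgeSet,
          Sym2.mem_iff]
        exact ⟨he, by tauto⟩
    · intro e1 h1 e2 h2 h
      exact Sym2.map.injective Subtype.val_injective h
    · intro e he
      induction e using Sym2.ind with
      | _ a b =>
        simp only [Finset.mem_filter, mem_edgeFinset, mem_edgeSet, Sym2.mem_iff] at he
        obtain ⟨hadj, hne⟩ := he
        push_neg at hne
        refine ⟨s(⟨a, fun h => hne.1 h.symm⟩, ⟨b, fun h => hne.2 h.symm⟩), ?_, ?_⟩
        · rw [mem_edgeFinset, mem_edgeSet]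
          exact hadj
        · simp [Sym2.map_pair_eq]
  omega

end NonCut

/-- If `G` and `H` are hypomorphic finite simple graphs on
`n ≥ 3` vertices (corresponding vertex-deleted subgraphs are isomorphic), then
`G` and `H` have the same number of connected components. -/
theorem card_components_eq_of_hypomorphic {n : ℕ} (hn : 3 ≤ n)
    (G H : SimpleGraph (Fin n))
    (hyp : ∀ i : Fin n,
      Nonempty ((G.induce ({i}ᶜ : Set (Fin n))) ≃g (H.induce ({i}ᶜ : Set (Fin n))))) :
    Nat.card G.ConnectedComponent = Nat.card H.ConnectedComponent := by
  classical
  have hVne : Nonempty (Fin n) := ⟨⟨0, by omega⟩⟩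
  have hE : ∀ i, Nat.card (G.induce ({i}ᶜ : Set (Fin n))).edgeSet
      = Nat.card (H.induce ({i}ᶜ : Set (Fin n))).edgeSet :=
    fun i => Nat.card_congr (hyp i).some.mapEdgeSet
  have hCC : ∀ i, Nat.card (G.induce ({i}ᶜ : Set (Fin n))).ConnectedComponent
      = Nat.card (H.induce ({i}ᶜ : Set (Fin n))).ConnectedComponent :=
    fun i => Nat.card_congr (hyp i).some.connectedComponentEquiv
  have hG1 : ∀ i, Nat.card (G.induce ({i}ᶜ : Set (Fin n))).edgeSet + G.degree i
      = Nat.card G.edgeSet := fun i => card_edge_induce G i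
  have hH1 : ∀ i, Nat.card (H.induce ({i}ᶜ : Set (Fin n))).edgeSet + H.degree i
      = Nat.card H.edgeSet := fun i => card_edge_induce H i
  -- total edge counts are equal
  have hcard : ∀ (K : SimpleGraph (Fin n)), Nat.card K.edgeSet = K.edgeFinset.card := by
    intro K
    rw [Nat.card_eq_fintype_card, edgeFinset_card]
  have hhsG : ∑ i, G.degree i = 2 * Nat.card G.edgeSet := by
    rw [hcard G]
    exact G.sum_degrees_eq_twice_card_edges
  have hhsH : ∑ i, H.degree i = 2 * Nat.card H.edgeSet := by
    rw [hcard H]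
    exact H.sum_degrees_eq_twice_card_edges
  have hsumG : (∑ i, Nat.card (G.induce ({i}ᶜ : Set (Fin n))).edgeSet)
      + 2 * Nat.card G.edgeSet = n * Nat.card G.edgeSet := by
    rw [← hhsG, ← Finset.sum_add_distrib]
    rw [Finset.sum_congr rfl (fun i _ => hG1 i)]
    simp [Finset.card_univ, mul_comm]
  have hsumH : (∑ i, Nat.card (H.induce ({i}ᶜ : Set (Fin n))).edgeSet)
      + 2 * Nat.card H.edgeSet = n * Nat.card H.edgeSet := by
    rw [← hhsH, ← Finset.sum_add_distrib]
    rw [Finset.sum_congr rfl (fun i _ => hH1 i)]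
    simp [Finset.card_univ, mul_comm]
  have hSS : (∑ i, Nat.card (G.induce ({i}ᶜ : Set (Fin n))).edgeSet)
      = ∑ i, Nat.card (H.induce ({i}ᶜ : Set (Fin n))).edgeSet :=
    Finset.sum_congr rfl (fun i _ => hE i)
  have hEE : Nat.card G.edgeSet = Nat.card H.edgeSet := by
    have e1 : ((∑ i, Nat.card (G.induce ({i}ᶜ : Set (Fin n))).edgeSet : ℕ) : ℤ)
        + 2 * (Nat.card G.edgeSet : ℤ) = (n : ℤ) * (Nat.card G.edgeSet : ℤ) := by
      exact_mod_cast hsumG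
    have e2 : ((∑ i, Nat.card (H.induce ({i}ᶜ : Set (Fin n))).edgeSet : ℕ) : ℤ)
        + 2 * (Nat.card H.edgeSet : ℤ) = (n : ℤ) * (Nat.card H.edgeSet : ℤ) := by
      exact_mod_cast hsumH
    have e3 : ((∑ i, Nat.card (G.induce ({i}ᶜ : Set (Fin n))).edgeSet : ℕ) : ℤ)
        = ((∑ i, Nat.card (H.induce ({i}ᶜ : Set (Fin n))).edgeSet : ℕ) : ℤ) := by
      exact_mod_cast hSS
    have hn2 : ((n : ℤ) - 2) ≠ 0 := by
      have : (3 : ℤ) ≤ (n : ℤ) := by exact_mod_cast hn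
      omega
    have e4 : ((n : ℤ) - 2) * (Nat.card G.edgeSet : ℤ)
        = ((n : ℤ) - 2) * (Nat.card H.edgeSet : ℤ) := by
      linear_combination e3 - e1 + e2
    exact_mod_cast mul_left_cancel₀ hn2 e4
  have hdeg : ∀ i, G.degree i = H.degree i := by
    intro i
    have := hG1 i
    have := hH1 i
    have := hE i
    omega
  by_cases hiso : ∃ i, ∀ w, ¬ G.Adj i w
  · obtain ⟨i, hi⟩ := hiso
    have hGd : ¬ 0 < G.degree i := by
      rw [degree_pos_iff_exists_adj]
      push_neg
      exact hi
    have hHd : ¬ 0 < H.degree i := by rw [← hdeg i]; exact hGd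
    have hHiso : ∀ w, ¬ H.Adj i w := by
      rw [degree_pos_iff_exists_adj] at hHd
      push_neg at hHd
      exact hHd
    rw [card_cc_isolated G hi, card_cc_isolated H hHiso, hCC i]
  · push_neg at hiso
    have hHadj : ∀ i, ∃ w, H.Adj i w := by
      intro i
      rw [← degree_pos_iff_exists_adj, ← hdeg i, degree_pos_iff_exists_adj]
      exact hiso i
    obtain ⟨v, hv⟩ := exists_noncut G hiso
    obtain ⟨w, hw⟩ := exists_noncut H hHadj
    have h1 : Nat.card G.ConnectedComponent ≤ Nat.card H.ConnectedComponent := by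
      obtain ⟨x, hx⟩ := hiso w
      calc Nat.card G.ConnectedComponent
          ≤ Nat.card (G.induce ({w}ᶜ : Set (Fin n))).ConnectedComponent :=
            card_cc_le_of_adj G hx
        _ = Nat.card (H.induce ({w}ᶜ : Set (Fin n))).ConnectedComponent := hCC w
        _ ≤ Nat.card H.ConnectedComponent := hw
    have h2 : Nat.card H.ConnectedComponent ≤ Nat.card G.ConnectedComponent := by
      obtain ⟨x, hx⟩ := hHadj v
      calc Nat.card H.ConnectedComponent
          ≤ Nat.card (H.induce ({v}ᶜ : Set (Fin n))).ConnectedComponent :=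
            card_cc_le_of_adj H hx
        _ = Nat.card (G.induce ({v}ᶜ : Set (Fin n))).ConnectedComponent := (hCC v).symm
        _ ≤ Nat.card G.ConnectedComponent := hv
    exact le_antisymm h1 h2
end
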